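/- Let Λ be a weight such that Λ + γ is regular, and let c > 0 be a real number. Let δ₀, δ₁, …, δ_m be positive roots such that for each i = 1, …, m the difference δ_i − δ_{i−1} is a simple root α with (α,α) = 2c and (Λ,α) ≤ 0. If (Λ + γ, δ₀) ≤ 0 and (1/c)·(Λ + γ, δ₀) ∈ ℤ, then (Λ + γ, δ_i) < 0 for all i = 0, 1, …, m. -/
import Mathlib


open scoped RealInnerProductSpace
open scoped Classical

/-- A reduced crystallographic root system `roots` spanning a real inner product
space `V`, with a chosen set `pos` of positive roots, the corresponding base
`simple` of simple roots, and the coefficient function `coeff`, where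
`coeff ξ α = c_α(ξ)` is the coefficient of the simple root `α` in the unique
expression `ξ = ∑_{α ∈ simple} c_α(ξ) • α`. -/
structure RootSystemData (V : Type*) [NormedAddCommGroup V] [InnerProductSpace ℝ V] where
  roots : Finset V
  pos : Finset V
  simple : Finset V
  coeff : V → V → ℝ
  pos_subset : pos ⊆ roots
  simple_subset : simple ⊆ pos
  root_ne_zero : ∀ δ ∈ roots, δ ≠ (0 : V)
  neg_mem : ∀ δ ∈ roots, -δ ∈ roots
  pos_or_neg : ∀ δ ∈ roots, δ ∈ pos ∨ -δ ∈ pos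
  pos_neg_not : ∀ δ ∈ pos, -δ ∉ pos
  reduced : ∀ δ ∈ roots, ∀ t : ℝ, t • δ ∈ roots → t = 1 ∨ t = -1
  crystallographic : ∀ δ ∈ roots, ∀ ε ∈ roots, ∃ n : ℤ, 2 * ⟪δ, ε⟫ / ⟪ε, ε⟫ = (n : ℝ)
  reflect_mem : ∀ δ ∈ roots, ∀ ε ∈ roots, δ - (2 * ⟪δ, ε⟫ / ⟪ε, ε⟫) • ε ∈ roots
  span_eq_top : Submodule.span ℝ (simple : Set V) = ⊤
  linearIndependent : LinearIndependent ℝ (fun α : simple => (α : V))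
  coeff_spec : ∀ ξ : V, ξ = ∑ α ∈ simple, coeff ξ α • α
  pos_coeff_nonneg : ∀ δ ∈ pos, ∀ α ∈ simple, 0 ≤ coeff δ α

namespace RootSystemData

variable {V : Type*} [NormedAddCommGroup V] [InnerProductSpace ℝ V]

/-- The support `C(ξ)` of `ξ`: the set of simple roots with nonzero coefficient in `ξ`. -/
noncomputable def support (R : RootSystemData V) (ξ : V) : Finset V :=
  R.simple.filter fun α => R.coeff ξ α ≠ 0

/-- The coefficientwise partial order: `x ≤ y` iff `c_α(x) ≤ c_α(y)` for all simple `α`. -/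
def cle (R : RootSystemData V) (x y : V) : Prop :=
  ∀ α ∈ R.simple, R.coeff x α ≤ R.coeff y α

/-- An `(A,B)`-root: a positive root whose support lies in `A ∪ B` and which has a
strictly positive coefficient at some element of `A`. -/
def IsABRoot (R : RootSystemData V) (A B : Finset V) (δ : V) : Prop :=
  δ ∈ R.pos ∧ R.support δ ⊆ A ∪ B ∧ ∃ α₀ ∈ A, 0 < R.coeff δ α₀

/-- A significant `(A,B)`-root. -/
def IsSignificant (R : RootSystemData V) (A B : Finset V) (δ : V) : Prop :=
  R.IsABRoot A B δ ∧ ∃ σ : V, R.IsABRoot A B σ ∧ R.cle σ δ ∧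
    (∑ β ∈ B, R.coeff σ β * ⟪β, β⟫) ≤ (∑ α ∈ A, R.coeff σ α * ⟪α, α⟫) ∧
    (∀ x ∈ R.support (δ - σ), ∀ y ∈ R.support (δ - σ), ‖x‖ = ‖y‖) ∧
    (∀ x ∈ R.support (δ - σ), ‖x‖ ≤ ‖σ‖)

/-- `ℓ(A,B)`, the number of significant `(A,B)`-roots. -/
noncomputable def ell (R : RootSystemData V) (A B : Finset V) : ℕ :=
  (R.pos.filter fun δ => R.IsSignificant A B δ).card

/-- `γ`, the half-sum of the positive roots. -/
noncomputable def gamma (R : RootSystemData V) : V :=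
  (2 : ℝ)⁻¹ • ∑ δ ∈ R.pos, δ

/-- A weight: `2(β,α)/(α,α) ∈ ℤ` for all roots `α`. -/
def IsWeight (R : RootSystemData V) (β : V) : Prop :=
  ∀ δ ∈ R.roots, ∃ n : ℤ, 2 * ⟪β, δ⟫ / ⟪δ, δ⟫ = (n : ℝ)

/-- A regular weight: not orthogonal to any positive root. -/
def IsRegular (R : RootSystemData V) (lam : V) : Prop :=
  ∀ δ ∈ R.pos, ⟪lam, δ⟫ ≠ 0

lemma coeff_unique (R : RootSystemData V) (ξ : V) (g : V → ℝ)
    (hg : ξ = ∑ α ∈ R.simple, g α • α) : ∀ β ∈ R.simple, R.coeff ξ β = g β := by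
  have h0 : ∑ α ∈ R.simple, (R.coeff ξ α - g α) • α = 0 := by
    simp only [sub_smul, Finset.sum_sub_distrib]
    rw [← R.coeff_spec ξ, ← hg, sub_self]
  have li := Fintype.linearIndependent_iff.mp R.linearIndependent
  intro β hβ
  have h := li (fun a => R.coeff ξ (a : V) - g (a : V)) ?_ ⟨β, hβ⟩
  · linarith
  · rw [← h0, ← Finset.sum_coe_sort R.simple (fun a => (R.coeff ξ a - g a) • a)]

lemma coeff_sub_smul (R : RootSystemData V) (δ : V) (k : ℝ) {α : V} (hα : α ∈ R.simple) :
    ∀ β ∈ R.simple, R.coeff (δ - k • α) β = R.coeff δ β - (if β = α then k else 0) := by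
  apply R.coeff_unique
  simp only [sub_smul, Finset.sum_sub_distrib, ← R.coeff_spec δ]
  congr 1
  rw [show k • α = ∑ β ∈ R.simple, (if β = α then k else 0) • β by
    simp [ite_smul, Finset.sum_ite_eq' R.simple α, hα]]

lemma coeff_neg (R : RootSystemData V) (δ : V) :
    ∀ β ∈ R.simple, R.coeff (-δ) β = - R.coeff δ β := by
  apply R.coeff_unique
  conv_lhs => rw [R.coeff_spec δ]
  rw [← Finset.sum_neg_distrib]
  simp [neg_smul]

/-- Reflection in a simple root maps positive roots other than `α` to positive roots. -/
lemma reflect_pos (R : RootSystemData V) {α δ : V} (hα : α ∈ R.simple) (hδ : δ ∈ R.pos)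
    (hne : δ ≠ α) : δ - (2 * ⟪δ, α⟫ / ⟪α, α⟫) • α ∈ R.pos := by
  have hαr : α ∈ R.roots := R.pos_subset (R.simple_subset hα)
  have hδr : δ ∈ R.roots := R.pos_subset hδ
  have hmem : δ - (2 * ⟪δ, α⟫ / ⟪α, α⟫) • α ∈ R.roots := R.reflect_mem δ hδr α hαr
  -- find a simple root β ≠ α with coeff δ β > 0
  obtain ⟨β, hβ, hβα, hβpos⟩ : ∃ β ∈ R.simple, β ≠ α ∧ 0 < R.coeff δ β := by
    by_contra hcon
    push_neg at hcon
    have hall : ∀ β ∈ R.simple, β ≠ α → R.coeff δ β = 0 := by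
      intro β hβ hβα
      exact le_antisymm (hcon β hβ hβα) (R.pos_coeff_nonneg δ hδ β hβ)
    have hδe : δ = R.coeff δ α • α := by
      conv_lhs => rw [R.coeff_spec δ]
      rw [Finset.sum_eq_single α]
      · intro b hb hba; rw [hall b hb hba, zero_smul]
      · intro h; exact absurd hα h
    have := R.reduced α hαr (R.coeff δ α) (hδe ▸ hδr)
    rcases this with h1 | h1
    · exact hne (by rw [hδe, h1, one_smul])
    · have : δ = -α := by rw [hδe, h1, neg_one_smul]
      exact R.pos_neg_not δ hδ (by rw [this, neg_neg]; exact R.simple_subset hα)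
  rcases R.pos_or_neg _ hmem with h | h
  · exact h
  · exfalso
    have h1 := R.coeff_sub_smul δ (2 * ⟪δ, α⟫ / ⟪α, α⟫) hα β hβ
    rw [if_neg hβα, sub_zero] at h1
    have h2 := R.coeff_neg (δ - (2 * ⟪δ, α⟫ / ⟪α, α⟫) • α) β hβ
    have h3 := R.pos_coeff_nonneg _ h β hβ
    rw [h2, h1] at h3
    linarith

lemma inner_self_ne_zero_of_root (R : RootSystemData V) {α : V} (hα : α ∈ R.roots) :
    ⟪α, α⟫ ≠ 0 :=
  fun h => R.root_ne_zero α hα (inner_self_eq_zero.mp h)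

/-- `(γ, α) = (α, α)/2` for each simple root `α`. -/
lemma inner_gamma_simple (R : RootSystemData V) {α : V} (hα : α ∈ R.simple) :
    ⟪R.gamma, α⟫ = ⟪α, α⟫ / 2 := by
  have hαp : α ∈ R.pos := R.simple_subset hα
  have hαr : α ∈ R.roots := R.pos_subset hαp
  have hαα : ⟪α, α⟫ ≠ 0 := R.inner_self_ne_zero_of_root hαr
  set k : V → ℝ := fun δ => 2 * ⟪δ, α⟫ / ⟪α, α⟫ with hk
  set f : V → V := fun δ => δ - k δ • α with hf
  have hinv : ∀ δ, f (f δ) = δ := by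
    intro δ
    have : k (f δ) = - k δ := by
      simp only [hf, hk, inner_sub_left, real_inner_smul_left]
      field_simp
      ring
    simp only [hf] at this ⊢
    rw [this]
    simp only [hk]
    module
  have hfα : f α = -α := by
    simp only [hf, hk]
    rw [show 2 * ⟪α, α⟫ / ⟪α, α⟫ = 2 by field_simp]
    module
  have hmap : ∀ δ ∈ R.pos.erase α, f δ ∈ R.pos.erase α := by
    intro δ hδ
    rw [Finset.mem_erase] at hδ ⊢
    refine ⟨?_, R.reflect_pos hα hδ.2 hδ.1⟩
    intro hc
    have : δ = f α := by rw [← hc, hinv]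
    rw [hfα] at this
    exact R.pos_neg_not δ hδ.2 (by rw [this, neg_neg]; exact hαp)
  have hsum : ∑ δ ∈ R.pos.erase α, f δ = ∑ δ ∈ R.pos.erase α, δ := by
    refine Finset.sum_nbij' f f hmap hmap (fun δ _ => hinv δ) (fun δ _ => hinv δ)
      (fun δ _ => rfl)
  set S : V := ∑ δ ∈ R.pos, δ with hS
  have hsplit : S = α + ∑ δ ∈ R.pos.erase α, δ := (Finset.add_sum_erase _ _ hαp).symm
  have hfsum : ∑ δ ∈ R.pos, f δ = S - (2:ℝ) • α := by
    rw [← Finset.add_sum_erase _ f hαp, hsum, hfα, hsplit]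
    module
  have hfsum2 : ∑ δ ∈ R.pos, f δ = S - (∑ δ ∈ R.pos, k δ) • α := by
    simp only [hf, Finset.sum_sub_distrib, Finset.sum_smul, hS]
  have heq : S - (∑ δ ∈ R.pos, k δ) • α = S - (2:ℝ) • α := hfsum2.symm.trans hfsum
  have hk2 : ∑ δ ∈ R.pos, k δ = 2 :=
    smul_left_injective ℝ (R.root_ne_zero α hαr) (sub_right_injective heq)
  have hSα : ⟪S, α⟫ = ⟪α, α⟫ := by
    have : ∑ δ ∈ R.pos, k δ = 2 * ⟪S, α⟫ / ⟪α, α⟫ := by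
      simp only [hk, hS, sum_inner, Finset.mul_sum, Finset.sum_div]
    rw [this] at hk2
    field_simp at hk2
    linarith
  simp only [RootSystemData.gamma, real_inner_smul_left, ← hS, hSα]
  ring

end RootSystemData


/-- Induction along a chain: if `Λ + γ` is regular, `δ₀, …, δ_m` are positive roots whose
consecutive differences are simple roots `α` of fixed squared length `2c` with `(Λ,α) ≤ 0`,
and `(Λ + γ, δ₀) ≤ 0` with `(1/c)(Λ + γ, δ₀) ∈ ℤ`, then `(Λ + γ, δ_i) < 0` for all `i`. -/
theorem inner_lt_zero_along_chain
    {V : Type*} [NormedAddCommGroup V] [InnerProductSpace ℝ V]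
    (R : RootSystemData V)
    (Λ : V) (hw : R.IsWeight Λ) (hreg : R.IsRegular (Λ + R.gamma))
    (c : ℝ) (hc : 0 < c) (m : ℕ) (d : ℕ → V)
    (hpos : ∀ i ≤ m, d i ∈ R.pos)
    (hstep : ∀ i, 1 ≤ i → i ≤ m → ∃ α ∈ R.simple,
      d i - d (i - 1) = α ∧ ⟪α, α⟫ = 2 * c ∧ ⟪Λ, α⟫ ≤ 0)
    (h0 : ⟪Λ + R.gamma, d 0⟫ ≤ 0)
    (hint : ∃ n : ℤ, (1 / c) * ⟪Λ + R.gamma, d 0⟫ = (n : ℝ)) :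
    ∀ i ≤ m, ⟪Λ + R.gamma, d i⟫ < 0 := by
  have key : ∀ i ≤ m, ∃ n : ℤ, ⟪Λ + R.gamma, d i⟫ = (n : ℝ) * c ∧ n < 0 := by
    intro i
    induction i with
    | zero =>
      intro _
      obtain ⟨n, hn⟩ := hint
      have hcne : c ≠ 0 := ne_of_gt hc
      have hval : ⟪Λ + R.gamma, d 0⟫ = (n : ℝ) * c := by
        field_simp at hn
        linarith
      have hne : ⟪Λ + R.gamma, d 0⟫ ≠ 0 := hreg (d 0) (hpos 0 (Nat.zero_le m))
      have hlt : ⟪Λ + R.gamma, d 0⟫ < 0 := lt_of_le_of_ne h0 hne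
      refine ⟨n, hval, ?_⟩
      by_contra hge
      push_neg at hge
      have : (0:ℝ) ≤ (n:ℝ) := by exact_mod_cast hge
      nlinarith
    | succ j ih =>
      intro hjm
      obtain ⟨n, hn, hnlt⟩ := ih (by omega)
      obtain ⟨α, hα, hdiff, hαα, hΛα⟩ := hstep (j + 1) (by omega) hjm
      simp only [Nat.add_sub_cancel] at hdiff
      have hαr : α ∈ R.roots := R.pos_subset (R.simple_subset hα)
      obtain ⟨k, hkdef⟩ := hw α hαr
      have hcne : c ≠ 0 := ne_of_gt hc
      have hΛαval : ⟪Λ, α⟫ = (k : ℝ) * c := by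
        rw [hαα] at hkdef
        field_simp at hkdef
        nlinarith [hkdef]
      have hγα : ⟪R.gamma, α⟫ = c := by
        rw [R.inner_gamma_simple hα, hαα]; ring
      have hdj : d (j + 1) = d j + α := by
        have := hdiff; linear_combination (norm := module) this
      have hval : ⟪Λ + R.gamma, d (j + 1)⟫ = ((n + k + 1 : ℤ) : ℝ) * c := by
        rw [hdj, inner_add_right, hn, inner_add_left, hΛαval, hγα]
        push_cast
        ring
      have hk0 : k ≤ 0 := by
        by_contra hkpos
        push_neg at hkpos
        have : (1:ℝ) ≤ (k:ℝ) := by exact_mod_cast hkpos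
        nlinarith [hΛα, hΛαval]
      have hne : ⟪Λ + R.gamma, d (j + 1)⟫ ≠ 0 := hreg _ (hpos (j + 1) hjm)
      refine ⟨n + k + 1, hval, ?_⟩
      by_contra hge
      push_neg at hge
      have h1 : n + k + 1 = 0 := by omega
      rw [h1] at hval
      simp at hval
      exact hne hval
  intro i hi
  obtain ⟨n, hn, hnlt⟩ := key i hi
  rw [hn]
  have : (n : ℝ) < 0 := by exact_mod_cast hnlt
  nlinarith
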